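/- arXiv:2102.04245 — 6 statements merged into one kernel-verified Lean document; each statement's English description precedes it below -/
import Mathlib

section
/- If A_x is a minimal generator of an element x in a closure system with closure operator cl (i.e., x ∈ cl(A_x) and x ∉ cl(B) for every proper subset B of A_x), then for every subset A of A_x, cl(A) ∩ A_x = A. -/
theorem stmt_0 {U : Type*} [Fintype U] (cl : Set U → Set U)
    (hext : ∀ Y : Set U, Y ⊆ cl Y)
    (hmono : ∀ Y Z : Set U, Y ⊆ Z → cl Y ⊆ cl Z)
    (hidem : ∀ Y : Set U, cl (cl Y) = cl Y)
    (x : U) (Ax : Set U)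
    (hgen : x ∈ cl Ax) (hmin : ∀ B : Set U, B ⊂ Ax → x ∉ cl B)
    (A : Set U) (hA : A ⊆ Ax) :
    cl A ∩ Ax = A := by
  apply Set.Subset.antisymm
  · rintro y ⟨hycl, hyAx⟩
    by_contra hyA
    set B := Ax \ {y} with hB
    have hAB : A ⊆ B := fun z hz => ⟨hA hz, fun h => hyA (h ▸ hz)⟩
    have hyB : y ∈ cl B := hmono A B hAB hycl
    have hsub : Ax ⊆ cl B := by
      intro z hz
      by_cases hzy : z = y
      · exact hzy ▸ hyB
      · exact hext B ⟨hz, hzy⟩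
    have : x ∈ cl B := by
      have := hmono Ax (cl B) hsub hgen
      rwa [hidem B] at this
    exact hmin B ((Set.ssubset_iff_of_subset Set.diff_subset).mpr ⟨y, hyAx, fun h => h.2 rfl⟩) this
  · exact fun y hy => ⟨hext A hy, hA hy⟩
end

section
/- In an atomistic modular closure system, every minimal generator A_x of any element x ∈ U is independent. -/
theorem stmt_5 {U : Type*} [Fintype U] (cl : Set U → Set U)
    (hext : ∀ Y : Set U, Y ⊆ cl Y)
    (hmono : ∀ Y Z : Set U, Y ⊆ Z → cl Y ⊆ cl Z)
    (hidem : ∀ Y : Set U, cl (cl Y) = cl Y)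
    (hempty : cl ∅ = ∅)
    (hatom : ∀ x : U, cl {x} = {x})
    -- modularity
    (hmod : ∀ F1 F2 F3 : Set U, cl F1 = F1 → cl F2 = F2 → cl F3 = F3 → F1 ⊆ F2 →
      cl (F1 ∪ (F2 ∩ F3)) = cl (F1 ∪ F3) ∩ F2)
    (x : U) (Ax : Set U)
    (hgen : x ∈ cl Ax) (hmin : ∀ B : Set U, B ⊂ Ax → x ∉ cl B) :
    ∀ Y1 Y2 : Set U, Y1 ⊆ Ax → Y2 ⊆ Ax → cl (Y1 ∩ Y2) = cl Y1 ∩ cl Y2 := by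
  -- cl (cl Y ∪ Z) = cl (Y ∪ Z)
  have clabs : ∀ Y Z : Set U, cl (cl Y ∪ Z) = cl (Y ∪ Z) := by
    intro Y Z
    apply Set.Subset.antisymm
    · have h1 : cl Y ∪ Z ⊆ cl (Y ∪ Z) := by
        apply Set.union_subset
        · exact hmono _ _ Set.subset_union_left
        · exact (Set.subset_union_right).trans (hext _)
      have := hmono _ _ h1
      rwa [hidem] at this
    · exact hmono _ _ (Set.union_subset_union_left _ (hext Y))
  -- Claim 1: no element of Ax is in the closure of the rest
  have claim1 : ∀ c ∈ Ax, c ∉ cl (Ax \ {c}) := by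
    intro c hc hcc
    have hsub : Ax ⊆ cl (Ax \ {c}) := by
      intro a ha
      by_cases hac : a = c
      · rw [hac]; exact hcc
      · exact hext _ ⟨ha, hac⟩
    have : cl Ax ⊆ cl (Ax \ {c}) := by
      have := hmono _ _ hsub
      rwa [hidem] at this
    exact hmin (Ax \ {c}) (Set.sdiff_singleton_ssubset.mpr hc) (this hgen)
  -- key inequality, induction on |C|
  have key : ∀ n : ℕ, ∀ B C : Set U, C.ncard = n → B ⊆ Ax → C ⊆ Ax →
      cl B ∩ cl C ⊆ cl (B ∩ C) := by
    intro n
    induction n using Nat.strong_induction_on with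
    | _ n ih =>
      intro B C hn hB hC
      by_cases hCB : C ⊆ B
      · have : B ∩ C = C := Set.inter_eq_self_of_subset_right hCB
        rw [this]
        exact Set.inter_subset_right
      · obtain ⟨c, hcC, hcB⟩ := Set.not_subset.mp hCB
        set C' : Set U := C \ {c} with hC'def
        have hcAx : c ∈ Ax := hC hcC
        -- c ∉ cl (cl C' ∪ cl B)
        have hnotc : c ∉ cl (cl C' ∪ cl B) := by
          intro hcm
          apply claim1 c hcAx
          have hsub : cl C' ∪ cl B ⊆ cl (Ax \ {c}) := by
            apply Set.union_subset
            · exact hmono _ _ (fun a ha => ⟨hC ha.1, ha.2⟩)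
            · exact hmono _ _ (fun a ha => ⟨hB ha, fun h => hcB (h ▸ ha)⟩)
          have := hmono _ _ hsub
          rw [hidem] at this
          exact this hcm
        have hC'C : cl C' ⊆ cl C := hmono _ _ Set.diff_subset
        -- first modularity application
        have mod1 : cl (cl C' ∪ (cl C ∩ cl B)) = cl (cl C' ∪ cl B) ∩ cl C :=
          hmod (cl C') (cl C) (cl B) (hidem _) (hidem _) (hidem _) hC'C
        set G : Set U := cl (cl C' ∪ cl B) ∩ cl C with hGdef
        have hGclosed : cl G = G := by rw [← mod1]; exact hidem _
        have hcG : c ∉ G := fun h => hnotc h.1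
        have hC'G : cl C' ⊆ G := Set.subset_inter
          ((Set.subset_union_left).trans (hext _)) hC'C
        -- second modularity application
        have mod2 : cl (cl C' ∪ (G ∩ {c})) = cl (cl C' ∪ {c}) ∩ G :=
          hmod (cl C') G ({c}) (hidem _) hGclosed (hatom c) hC'G
        have hGc : G ∩ {c} = (∅ : Set U) := by
          ext a
          simp only [Set.mem_inter_iff, Set.mem_singleton_iff, Set.mem_empty_iff_false,
            iff_false, not_and]
          rintro hG rfl
          exact hcG hG
        have hCeq : cl (cl C' ∪ {c}) = cl C := by
          rw [clabs]
          have hu : C' ∪ {c} = C := by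
            rw [hC'def]
            exact Set.diff_union_of_subset (Set.singleton_subset_iff.mpr hcC)
          rw [hu]
        have hGeq : G = cl C' := by
          have h1 : cl (cl C' ∪ (G ∩ {c})) = cl C' := by
            rw [hGc, Set.union_empty, hidem]
          rw [h1, hCeq] at mod2
          have h2 : cl C ∩ G = G :=
            Set.inter_eq_self_of_subset_right (fun a ha => ha.2)
          rw [mod2, h2]
        -- conclude
        have step : cl B ∩ cl C ⊆ cl C' := by
          intro a ha
          have : a ∈ cl (cl C' ∪ (cl C ∩ cl B)) :=
            hext _ (Set.mem_union_right _ ⟨ha.2, ha.1⟩)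
          rw [mod1] at this
          rw [← hGeq]
          exact this
        have hlt : C'.ncard < n := by
          rw [← hn]
          exact Set.ncard_diff_singleton_lt_of_mem hcC (Set.toFinite C)
        have ihuse : cl B ∩ cl C' ⊆ cl (B ∩ C') :=
          ih C'.ncard hlt B C' rfl hB (Set.diff_subset.trans hC)
        intro a ha
        have haC' : a ∈ cl C' := step ha
        have : a ∈ cl (B ∩ C') := ihuse ⟨ha.1, haC'⟩
        have hBC : B ∩ C' = B ∩ C := by
          ext b
          simp only [hC'def, Set.mem_inter_iff, Set.mem_diff, Set.mem_singleton_iff]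
          constructor
          · rintro ⟨hb, hbc, _⟩; exact ⟨hb, hbc⟩
          · rintro ⟨hb, hbc⟩; exact ⟨hb, hbc, fun h => hcB (h ▸ hb)⟩
        rwa [hBC] at this
  intro Y1 Y2 h1 h2
  apply Set.Subset.antisymm
  · exact Set.subset_inter (hmono _ _ Set.inter_subset_left) (hmono _ _ Set.inter_subset_right)
  · exact key Y2.ncard Y1 Y2 rfl h1 h2
end

section
/- Let cl be the closure operator of the closure system determined by an implicational base IS over U together with the requirement of being an independent set of a graph G = (U, E) (where U itself is also closed). Then every key K (minimal set with cl(K) = U) can be written as K = A_u ∪ A_v for some edge uv ∈ E, where A_u is a minimal generator of u and A_v is a minimal generator of v with respect to the closure operator of IS. -/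
/-- `F` models the implicational base `IS`. -/
def Models {U : Type*} (IS : Set (Set U × Set U)) (F : Set U) : Prop :=
  ∀ p ∈ IS, p.1 ⊆ F → p.2 ⊆ F

/-- A set is independent in the graph `G` if it contains no edge. -/
def IndepIn {U : Type*} (G : SimpleGraph U) (F : Set U) : Prop :=
  ∀ a ∈ F, ∀ b ∈ F, ¬ G.Adj a b

/-- The closure operator of the implicational base `IS`. -/
def phi {U : Type*} (IS : Set (Set U × Set U)) (A : Set U) : Set U :=
  ⋂₀ {F : Set U | Models IS F ∧ A ⊆ F}

/-- The closure operator of the combined closure system: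
closed sets are the independent models of `IS`, together with `U`. -/
def clD {U : Type*} (IS : Set (Set U × Set U)) (G : SimpleGraph U) (A : Set U) : Set U :=
  ⋂₀ {F : Set U | ((Models IS F ∧ IndepIn G F) ∨ F = Set.univ) ∧ A ⊆ F}

/-- `A` is a minimal generator of `u` with respect to the closure operator `c`. -/
def MinGen {U : Type*} (c : Set U → Set U) (u : U) (A : Set U) : Prop :=
  u ∈ c A ∧ ∀ B : Set U, B ⊂ A → u ∉ c B

lemma subset_phi {U : Type*} (IS : Set (Set U × Set U)) (A : Set U) : A ⊆ phi IS A :=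
  fun x hx => Set.mem_sInter.2 fun _ hF => hF.2 hx

lemma phi_mono {U : Type*} (IS : Set (Set U × Set U)) {A B : Set U} (h : A ⊆ B) :
    phi IS A ⊆ phi IS B := fun x hx =>
  Set.mem_sInter.2 fun F hF => Set.mem_sInter.1 hx F ⟨hF.1, h.trans hF.2⟩

lemma models_phi {U : Type*} (IS : Set (Set U × Set U)) (A : Set U) :
    Models IS (phi IS A) := by
  intro p hp h1 x hx
  refine Set.mem_sInter.2 fun F hF => ?_
  exact hF.1 p hp (fun y hy => Set.mem_sInter.1 (h1 hy) F hF) hx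

lemma phi_subset {U : Type*} (IS : Set (Set U × Set U)) {A F : Set U}
    (hF : Models IS F) (hAF : A ⊆ F) : phi IS A ⊆ F :=
  Set.sInter_subset_of_mem ⟨hF, hAF⟩

theorem stmt_6 {U : Type*} [Fintype U]
    (IS : Set (Set U × Set U)) (G : SimpleGraph U) (hG : ∃ a b : U, G.Adj a b)
    (K : Set U)
    -- K is a key of the combined closure system
    (hK : clD IS G K = Set.univ)
    (hKmin : ∀ B : Set U, B ⊂ K → clD IS G B ≠ Set.univ) :
    ∃ u v : U, G.Adj u v ∧ ∃ Au Av : Set U,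
      MinGen (phi IS) u Au ∧ MinGen (phi IS) v Av ∧ K = Au ∪ Av := by
  -- phi IS K is not independent (it contains an edge)
  have hnotindep : ¬ IndepIn G (phi IS K) := by
    intro hind
    have hsub : clD IS G K ⊆ phi IS K :=
      Set.sInter_subset_of_mem ⟨Or.inl ⟨models_phi IS K, hind⟩, subset_phi IS K⟩
    have huniv : phi IS K = Set.univ := by
      apply Set.eq_univ_of_univ_subset
      rw [← hK]; exact hsub
    obtain ⟨a, b, hab⟩ := hG
    exact hind a (huniv ▸ Set.mem_univ a) b (huniv ▸ Set.mem_univ b) hab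
  simp only [IndepIn, not_forall] at hnotindep
  obtain ⟨u, hu, v, hv, hadj⟩ := hnotindep
  rw [not_not] at hadj
  -- extract minimal generators inside K
  have wf : WellFoundedLT (Set U) := Finite.to_wellFoundedLT
  have getmin : ∀ w : U, w ∈ phi IS K → ∃ A : Set U, A ⊆ K ∧ MinGen (phi IS) w A := by
    intro w hw
    obtain ⟨A, ⟨hAK, hwA⟩, hmin⟩ := wf.wf.has_min {B : Set U | B ⊆ K ∧ w ∈ phi IS B}
      ⟨K, subset_rfl, hw⟩
    refine ⟨A, hAK, hwA, fun B hB hwB => ?_⟩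
    exact hmin B ⟨hB.subset.trans hAK, hwB⟩ hB
  obtain ⟨Au, hAuK, hAu⟩ := getmin u hu
  obtain ⟨Av, hAvK, hAv⟩ := getmin v hv
  refine ⟨u, v, hadj, Au, Av, hAu, hAv, ?_⟩
  -- K = Au ∪ Av
  have hsubK : Au ∪ Av ⊆ K := Set.union_subset hAuK hAvK
  have hcl : clD IS G (Au ∪ Av) = Set.univ := by
    apply Set.eq_univ_of_forall
    intro x
    refine Set.mem_sInter.2 fun F hF => ?_
    rcases hF.1 with hF1 | hF1
    · exfalso
      have hphiF : phi IS (Au ∪ Av) ⊆ F := phi_subset IS hF1.1 hF.2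
      have huF : u ∈ F := hphiF (phi_mono IS Set.subset_union_left hAu.1)
      have hvF : v ∈ F := hphiF (phi_mono IS Set.subset_union_right hAv.1)
      exact hF1.2 u huF v hvF hadj
    · rw [hF1]; trivial
  by_contra hne
  exact hKmin (Au ∪ Av) (HasSubset.Subset.ssubset_of_ne hsubK (fun h => hne h.symm)) hcl
end

section
/- If A_x is a minimal generator of x and A, A' are distinct subsets of A_x, then cl(A) ≠ cl(A'). -/
theorem stmt_12 {U : Type*} [Fintype U] (cl : Set U → Set U)
    (hext : ∀ Y : Set U, Y ⊆ cl Y)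
    (hmono : ∀ Y Z : Set U, Y ⊆ Z → cl Y ⊆ cl Z)
    (hidem : ∀ Y : Set U, cl (cl Y) = cl Y)
    (x : U) (Ax : Set U)
    (hgen : x ∈ cl Ax) (hmin : ∀ B : Set U, B ⊂ Ax → x ∉ cl B)
    (A A' : Set U) (hA : A ⊆ Ax) (hA' : A' ⊆ Ax) (hne : A ≠ A') :
    cl A ≠ cl A' := by
  have key : ∀ B : Set U, B ⊆ Ax → cl B ∩ Ax = B := by
    intro B hB
    apply Set.Subset.antisymm _ (Set.subset_inter (hext B) hB)
    intro y ⟨hyc, hyAx⟩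
    by_contra hyB
    have hss : Ax \ {y} ⊂ Ax := Set.sdiff_singleton_ssubset.mpr hyAx
    have hBsub : B ⊆ Ax \ {y} := fun z hz => ⟨hB hz, fun h => hyB (h ▸ hz)⟩
    have hy' : y ∈ cl (Ax \ {y}) := hmono _ _ hBsub hyc
    have hAxsub : Ax ⊆ cl (Ax \ {y}) := by
      intro z hz
      by_cases hzy : z = y
      · exact hzy ▸ hy'
      · exact hext _ ⟨hz, hzy⟩
    have : x ∈ cl (Ax \ {y}) := by
      have := hmono _ _ hAxsub hgen
      rwa [hidem] at this
    exact hmin _ hss this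
  intro h
  apply hne
  rw [← key A hA, ← key A' hA', h]
end

section
/- In an atomistic closure system with Carathéodory number at most 2, every minimal generator is independent. -/
theorem stmt_13 {U : Type*} [Fintype U] (cl : Set U → Set U)
    (hext : ∀ Y : Set U, Y ⊆ cl Y)
    (hmono : ∀ Y Z : Set U, Y ⊆ Z → cl Y ⊆ cl Z)
    (hidem : ∀ Y : Set U, cl (cl Y) = cl Y)
    (hempty : cl ∅ = ∅)
    (hatom : ∀ x : U, cl {x} = {x})
    -- Carathéodory number at most 2: every minimal generator has size at most 2
    (hcara : ∀ (x : U) (A : Set U), x ∈ cl A → (∀ B : Set U, B ⊂ A → x ∉ cl B) →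
      A.ncard ≤ 2)
    (x : U) (Ax : Set U)
    (hgen : x ∈ cl Ax) (hmin : ∀ B : Set U, B ⊂ Ax → x ∉ cl B) :
    ∀ Y1 Y2 : Set U, Y1 ⊆ Ax → Y2 ⊆ Ax → cl (Y1 ∩ Y2) = cl Y1 ∩ cl Y2 := by
  have hA2 : Ax.ncard ≤ 2 := hcara x Ax hgen hmin
  have clsmall : ∀ Y : Set U, Y.ncard ≤ 1 → cl Y = Y := by
    intro Y hY
    rcases (Set.ncard_le_one_iff_eq (Set.toFinite Y)).mp hY with rfl | ⟨a, rfl⟩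
    · exact hempty
    · exact hatom a
  intro Y1 Y2 h1 h2
  by_cases h12 : Y1 ⊆ Y2
  · rw [Set.inter_eq_self_of_subset_left h12]
    exact subset_antisymm (Set.subset_inter subset_rfl (hmono _ _ h12))
      Set.inter_subset_left
  by_cases h21 : Y2 ⊆ Y1
  · rw [Set.inter_eq_self_of_subset_right h21]
    exact subset_antisymm (Set.subset_inter (hmono _ _ h21) subset_rfl)
      Set.inter_subset_right
  have hp1 : Y1 ⊂ Ax := ⟨h1, fun h => h21 (h2.trans h)⟩
  have hp2 : Y2 ⊂ Ax := ⟨h2, fun h => h12 (h1.trans h)⟩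
  have hc1 : Y1.ncard ≤ 1 := by
    have := Set.ncard_lt_ncard hp1 (Set.toFinite Ax)
    omega
  have hc2 : Y2.ncard ≤ 1 := by
    have := Set.ncard_lt_ncard hp2 (Set.toFinite Ax)
    omega
  have hci : (Y1 ∩ Y2).ncard ≤ 1 :=
    le_trans (Set.ncard_le_ncard Set.inter_subset_left (Set.toFinite Y1)) hc1
  rw [clsmall _ hc1, clsmall _ hc2, clsmall _ hci]
end

section
/- Let G = (U, E) be a graph and consider the closure system whose closed sets are the independent sets of G together with U. If a closure system C' on U arises from an implicational base and K is the set of its keys (minimal sets whose closure is U), then the maximal independent sets of the hypergraph K (maximal subsets of U containing no member of K) are exactly the co-atoms of C'. -/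
theorem stmt_14 {U : Type*} [Fintype U] (cl : Set U → Set U)
    (hext : ∀ Y : Set U, Y ⊆ cl Y)
    (hmono : ∀ Y Z : Set U, Y ⊆ Z → cl Y ⊆ cl Z)
    (hidem : ∀ Y : Set U, cl (cl Y) = cl Y)
    -- the set of keys of the closure system
    (Keys : Set (Set U))
    (hKeys : Keys = {K : Set U | cl K = Set.univ ∧ ∀ B : Set U, B ⊂ K → cl B ≠ Set.univ})
    (S : Set U) :
    -- S is a maximal independent set of the hypergraph of keys
    ((∀ K ∈ Keys, ¬ K ⊆ S) ∧
        ∀ T : Set U, (∀ K ∈ Keys, ¬ K ⊆ T) → S ⊆ T → S = T) ↔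
      -- iff S is a co-atom of the closure system
      (cl S = S ∧ S ≠ Set.univ ∧ ∀ F : Set U, cl F = F → S ⊂ F → F = Set.univ) := by
  subst hKeys
  -- Key lemma: cl T = univ iff T contains a key
  have keylem : ∀ T : Set U, cl T = Set.univ →
      ∃ K, (cl K = Set.univ ∧ ∀ B : Set U, B ⊂ K → cl B ≠ Set.univ) ∧ K ⊆ T := by
    intro T hT
    have hwf : WellFounded ((· ⊂ ·) : Set U → Set U → Prop) := by
      have : WellFoundedLT (Set U) := inferInstance
      exact this.wf
    obtain ⟨K, ⟨hKT, hKcl⟩, hmin⟩ :=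
      hwf.has_min {B | B ⊆ T ∧ cl B = Set.univ} ⟨T, subset_rfl, hT⟩
    refine ⟨K, ⟨hKcl, ?_⟩, hKT⟩
    intro B hB hBcl
    exact hmin B ⟨hB.subset.trans hKT, hBcl⟩ hB
  have indep : ∀ T : Set U,
      (∀ K ∈ {K : Set U | cl K = Set.univ ∧ ∀ B : Set U, B ⊂ K → cl B ≠ Set.univ}, ¬ K ⊆ T)
        ↔ cl T ≠ Set.univ := by
    intro T
    constructor
    · intro h hT
      obtain ⟨K, hK, hKT⟩ := keylem T hT
      exact h K hK hKT
    · intro h K hK hKT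
      exact h (Set.eq_univ_of_univ_subset (hK.1 ▸ hmono K T hKT))
  constructor
  · rintro ⟨h1, h2⟩
    have hScl : cl S ≠ Set.univ := (indep S).1 h1
    have hSclosed : S = cl S := by
      refine h2 (cl S) ?_ (hext S)
      rw [indep (cl S), hidem S]
      exact hScl
    refine ⟨hSclosed.symm, ?_, ?_⟩
    · intro h
      exact hScl (by rw [← hSclosed, h])
    · intro F hF hSF
      by_contra hFne
      have : S = F := h2 F ((indep F).2 (by rw [hF]; exact hFne)) hSF.subset
      exact hSF.ne this
  · rintro ⟨hclS, hSne, hcoatom⟩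
    constructor
    · rw [indep S, hclS]; exact hSne
    · intro T hT hST
      have hTcl : cl T ≠ Set.univ := (indep T).1 hT
      have hSclT : S ⊆ cl T := hST.trans (hext T)
      rcases eq_or_ssubset_of_subset hSclT with h | h
      · have : T ⊆ S := h ▸ hext T
        exact le_antisymm hST this
      · exact absurd (hcoatom (cl T) (hidem T) h) hTcl
end
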